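/- Let X be a vector of n iid Pareto(α) random variables with α > 1 (finite mean). For θ, η ∈ ℝ₊ⁿ with θ ⪯ η in majorization order, η·X ≤_ssd θ·X, i.e., E[u(η·X)] ≤ E[u(θ·X)] for every increasing concave function u for which the expectations exist. -/

import Mathlib

/-!
Majorization `θ ⪯ η` places `θ` in the permutohedron of `η`, the convex hull of the
rearrangements `η ∘ σ`. For increasingly sorted vectors this follows by induction on the number
of coordinates where `θ` and `η` differ: at the first index `k` with `θ k < η k` and the last
earlier index `j` with `η j < θ j`, moving `δ = min (θ j - η j) (η k - θ k)` from `η k` to `η j`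
keeps `η` sorted and majorizing `θ`, stays on the segment between `η` and `η ∘ swap j k`, and
makes one more coordinate agree.

Since the `X i` are i.i.d., every `(η ∘ σ) ⬝ X` has the law of `η ⬝ X`. Writing
`θ = ∑ c, w c • (η ∘ σ c)`, Jensen's inequality for the concave `u` gives
`∑ c, w c * u ((η ∘ σ c) ⬝ X) ≤ u (θ ⬝ X)` pointwise, and taking expectations proves the claim.
-/

open MeasureTheory ProbabilityTheory Real Finset

noncomputable section

variable {Ω : Type*} [MeasurableSpace Ω]

/-- `X ~ Pareto(α)` : cdf `1 - x^(-α)` for `x ≥ 1`. -/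
def IsPareto (P : Measure Ω) (α : ℝ) (X : Ω → ℝ) : Prop :=
  Measurable X ∧ (∀ x : ℝ, 1 ≤ x → P {ω | x < X ω} = ENNReal.ofReal (x ^ (-α))) ∧
    P {ω | X ω < 1} = 0

/-- the increasing rearrangement of a vector -/
def sortedVec {n : ℕ} (f : Fin n → ℝ) : Fin n → ℝ := f ∘ Tuple.sort f

/-- `MajorizedBy θ η` : `θ ⪯ η`, i.e. equal sums and the sum of the `k` smallest
components of `θ` is at least that of `η` for each `k`. -/
def MajorizedBy {n : ℕ} (θ η : Fin n → ℝ) : Prop :=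
  (∑ i, θ i = ∑ i, η i) ∧
  ∀ k : ℕ, k ≤ n →
    ∑ i ∈ Finset.univ.filter (fun i : Fin n => (i : ℕ) < k), sortedVec η i ≤
    ∑ i ∈ Finset.univ.filter (fun i : Fin n => (i : ℕ) < k), sortedVec θ i

open Function

section Permutohedron

variable {ι : Type*}

def permutohedron (η : ι → ℝ) : Set (ι → ℝ) :=
  convexHull ℝ (Set.range fun σ : Equiv.Perm ι => η ∘ σ)

lemma comp_mem_permutohedron (η : ι → ℝ) (σ : Equiv.Perm ι) : η ∘ σ ∈ permutohedron η :=
  subset_convexHull ℝ _ ⟨σ, rfl⟩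

lemma self_mem_permutohedron (η : ι → ℝ) : η ∈ permutohedron η :=
  comp_mem_permutohedron η 1

lemma comp_mem_permutohedron_of_mem {θ η : ι → ℝ} (h : θ ∈ permutohedron η)
    (σ : Equiv.Perm ι) : θ ∘ σ ∈ permutohedron η := by
  have := Set.mem_image_of_mem (LinearMap.funLeft ℝ ℝ σ) h
  rw [permutohedron, LinearMap.image_convexHull, ← Set.range_comp] at this
  refine convexHull_mono ?_ this
  rintro _ ⟨τ, rfl⟩
  exact ⟨τ * σ, rfl⟩

lemma permutohedron_subset_of_mem {θ η : ι → ℝ} (h : θ ∈ permutohedron η) :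
    permutohedron θ ⊆ permutohedron η :=
  convexHull_min (Set.range_subset_iff.2 (comp_mem_permutohedron_of_mem h))
    (convex_convexHull ℝ _)

lemma mem_permutohedron_trans {θ η ζ : ι → ℝ} (hθ : θ ∈ permutohedron η)
    (hη : η ∈ permutohedron ζ) : θ ∈ permutohedron ζ :=
  permutohedron_subset_of_mem hη hθ

lemma permutohedron_comp (η : ι → ℝ) (σ : Equiv.Perm ι) :
    permutohedron (η ∘ σ) = permutohedron η :=
  (permutohedron_subset_of_mem (comp_mem_permutohedron η σ)).antisymm <|
    permutohedron_subset_of_mem <| by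
      simpa [comp_assoc] using comp_mem_permutohedron (η ∘ σ) σ⁻¹

variable [DecidableEq ι]

def transfer (η : ι → ℝ) (j k : ι) (δ : ℝ) : ι → ℝ :=
  η + Pi.single j δ - Pi.single k δ

variable {η : ι → ℝ} {j k : ι} {δ : ℝ}

lemma transfer_apply_left (hjk : j ≠ k) : transfer η j k δ j = η j + δ := by
  simp [transfer, hjk]

lemma transfer_apply_right (hjk : j ≠ k) : transfer η j k δ k = η k - δ := by
  simp [transfer, hjk.symm]

lemma transfer_apply_of_ne {i : ι} (hj : i ≠ j) (hk : i ≠ k) : transfer η j k δ i = η i := by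
  simp [transfer, hj, hk]

lemma sum_transfer [Fintype ι] : ∑ i, transfer η j k δ i = ∑ i, η i := by
  simp [transfer, sum_add_distrib, sum_sub_distrib]

lemma transfer_mem_permutohedron (hδ : 0 ≤ δ) (hδjk : δ ≤ η k - η j) :
    transfer η j k δ ∈ permutohedron η := by
  obtain rfl | hδ := hδ.eq_or_lt
  · simpa [transfer] using self_mem_permutohedron η
  have hgap : 0 < η k - η j := hδ.trans_le hδjk
  have hjk : j ≠ k := by rintro rfl; simp at hgap
  have hcomb : transfer η j k δ = η + (δ / (η k - η j)) • (η ∘ Equiv.swap j k - η) := by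
    funext i
    simp only [transfer, Pi.add_apply, Pi.sub_apply, Pi.smul_apply, Pi.single_apply, comp_apply,
      Equiv.swap_apply_def, smul_eq_mul]
    split_ifs <;> subst_vars <;> first | exact absurd rfl hjk | (field_simp; ring)
  rw [hcomb]
  exact (convex_convexHull ℝ _).add_smul_sub_mem (self_mem_permutohedron η)
    (comp_mem_permutohedron η (Equiv.swap j k))
    ⟨div_nonneg hδ.le hgap.le, (div_le_one hgap).2 hδjk⟩

end Permutohedron

section Majorization

variable {n : ℕ}

def lowerSum (f : Fin n → ℝ) (m : ℕ) : ℝ :=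
  ∑ i ∈ univ.filter (fun i : Fin n => (i : ℕ) < m), f i

lemma lowerSum_succ (f : Fin n → ℝ) (k : Fin n) :
    lowerSum f (k + 1) = lowerSum f k + f k := by
  have : univ.filter (fun i : Fin n => (i : ℕ) < k + 1)
      = insert k (univ.filter fun i : Fin n => (i : ℕ) < k) := by
    ext i
    simp [Fin.val_eq_val, le_iff_eq_or_lt]
  rw [lowerSum, this, sum_insert (by simp), add_comm]
  rfl

lemma lowerSum_transfer (η : Fin n → ℝ) (j k : Fin n) (δ : ℝ) (m : ℕ) :
    lowerSum (transfer η j k δ) m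
      = lowerSum η m + (if (j : ℕ) < m then δ else 0) - (if (k : ℕ) < m then δ else 0) := by
  simp [lowerSum, transfer, sum_add_distrib, sum_sub_distrib, sum_pi_single']

lemma exists_crossing {θ η : Fin n → ℝ} (hsum : ∑ i, θ i = ∑ i, η i)
    (hle : ∀ m ≤ n, lowerSum η m ≤ lowerSum θ m) (hne : θ ≠ η) :
    ∃ j k : Fin n, j < k ∧ η j < θ j ∧ θ k < η k ∧ (∀ i < k, η i ≤ θ i) ∧
      ∀ i, j < i → i < k → η i = θ i := by
  have hT : (univ.filter fun i => θ i < η i).Nonempty := by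
    by_contra! h
    refine hne (funext fun i => ?_)
    have hge : ∀ i ∈ univ, η i ≤ θ i := fun i _ => by
      simpa using Finset.filter_eq_empty_iff.1 h (mem_univ i)
    exact ((sum_eq_sum_iff_of_le hge).1 hsum.symm i (mem_univ i)).symm
  obtain ⟨k, hk, hkmin⟩ := exists_min_image _ id hT
  simp only [mem_filter, mem_univ, true_and, id] at hk hkmin
  have hbelow : ∀ i < k, η i ≤ θ i := fun i hi => le_of_not_gt fun h => (hkmin i h).not_gt hi
  have hJ : (univ.filter fun i => i < k ∧ η i < θ i).Nonempty := by
    by_contra! h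
    have hθη : lowerSum θ k ≤ lowerSum η k := sum_le_sum fun i hi => by
      have hik : i < k := Fin.lt_def.2 (mem_filter.1 hi).2
      simpa [hik] using Finset.filter_eq_empty_iff.1 h (mem_univ i)
    have := hle (k + 1) k.isLt
    rw [lowerSum_succ, lowerSum_succ] at this
    linarith
  obtain ⟨j, hj, hjmax⟩ := exists_max_image _ id hJ
  simp only [mem_filter, mem_univ, true_and, id] at hj hjmax
  obtain ⟨hjk, hj⟩ := hj
  refine ⟨j, k, hjk, hj, hk, hbelow, fun i hji hik => (hbelow i hik).antisymm ?_⟩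
  exact le_of_not_gt fun h => (hjmax i ⟨hik, h⟩).not_gt hji

section Crossing

variable {θ η : Fin n → ℝ} {j k : Fin n} {δ : ℝ}

lemma monotone_transfer (hθ : Monotone θ) (hη : Monotone η) (hjk : j < k) (hδ : 0 ≤ δ)
    (hj : η j + δ ≤ θ j) (hk : θ k ≤ η k - δ) (hbelow : ∀ i < k, η i ≤ θ i)
    (hmid : ∀ i, j < i → i < k → η i = θ i) : Monotone (transfer η j k δ) := by
  have hjk' := hjk.ne
  intro a b hab
  obtain rfl | hab := hab.eq_or_lt
  · rfl
  have hθab := hθ hab.le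
  have hηab := hη hab.le
  rcases eq_or_ne a j with rfl | haj
  · rw [transfer_apply_left hjk']
    rcases lt_trichotomy b k with hbk | rfl | hbk
    · rw [transfer_apply_of_ne hab.ne' hbk.ne, hmid b hab hbk]; linarith
    · rw [transfer_apply_right hjk']; linarith [hθ hjk.le]
    · rw [transfer_apply_of_ne hab.ne' hbk.ne']; linarith [hθ hjk.le, hη hbk.le]
  rcases eq_or_ne a k with rfl | hak
  · rw [transfer_apply_right hjk', transfer_apply_of_ne (hjk.trans hab).ne' hab.ne']
    linarith
  rw [transfer_apply_of_ne haj hak]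
  rcases eq_or_ne b j with rfl | hbj
  · rw [transfer_apply_left hjk']; linarith [hj, hbelow b hjk]
  rcases eq_or_ne b k with rfl | hbk
  · rw [transfer_apply_right hjk']; linarith [hbelow a hab]
  rw [transfer_apply_of_ne hbj hbk]
  exact hηab

lemma lowerSum_transfer_le (hle : ∀ m ≤ n, lowerSum η m ≤ lowerSum θ m) (hjk : j < k)
    (hj : η j + δ ≤ θ j) (hbelow : ∀ i < k, η i ≤ θ i) {m : ℕ} (hm : m ≤ n) :
    lowerSum (transfer η j k δ) m ≤ lowerSum θ m := by
  rw [lowerSum_transfer]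
  by_cases hkm : (k : ℕ) < m
  · simp only [hkm, if_true, (Fin.lt_def.1 hjk).trans hkm]
    linarith [hle m hm]
  by_cases hjm : (j : ℕ) < m
  · have hgap : θ j - η j ≤ lowerSum θ m - lowerSum η m := by
      rw [lowerSum, lowerSum, ← sum_sub_distrib]
      refine single_le_sum (f := fun i => θ i - η i) (fun i hi => ?_) (by simpa using hjm)
      have : i < k := Fin.lt_def.2 ((mem_filter.1 hi).2.trans_le (not_lt.1 hkm))
      linarith [hbelow i this]
    simp only [hjm, hkm, if_true, if_false]
    linarith
  simp only [hjm, hkm, if_false]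
  linarith [hle m hm]

end Crossing

lemma exists_transfer_of_monotone {θ η : Fin n → ℝ} (hθ : Monotone θ) (hη : Monotone η)
    (hsum : ∑ i, θ i = ∑ i, η i) (hle : ∀ m ≤ n, lowerSum η m ≤ lowerSum θ m) (hne : θ ≠ η) :
    ∃ j k δ, 0 ≤ δ ∧ δ ≤ η k - η j ∧ Monotone (transfer η j k δ) ∧
      (∀ m ≤ n, lowerSum (transfer η j k δ) m ≤ lowerSum θ m) ∧
      #{i | θ i ≠ transfer η j k δ i} < #{i | θ i ≠ η i} := by
  obtain ⟨j, k, hjk, hj, hk, hbelow, hmid⟩ := exists_crossing hsum hle hne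
  set δ := min (θ j - η j) (η k - θ k)
  have hδ : 0 ≤ δ := le_min (by linarith) (by linarith)
  have hδj : η j + δ ≤ θ j := by linarith [min_le_left (θ j - η j) (η k - θ k)]
  have hδk : θ k ≤ η k - δ := by linarith [min_le_right (θ j - η j) (η k - θ k)]
  refine ⟨j, k, δ, hδ, by linarith [hθ hjk.le],
    monotone_transfer hθ hη hjk hδ hδj hδk hbelow hmid,
    fun m hm => lowerSum_transfer_le hle hjk hδj hbelow hm, card_lt_card ?_⟩
  refine (ssubset_iff_of_subset fun i => ?_).2 ?_
  · simp only [mem_filter, mem_univ, true_and]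
    intro hi
    rcases eq_or_ne i j with rfl | hij
    · exact hj.ne'
    rcases eq_or_ne i k with rfl | hik
    · exact hk.ne
    rwa [transfer_apply_of_ne hij hik] at hi
  -- `δ` closes the gap at `j` or at `k`, whichever is smaller
  rcases min_choice (θ j - η j) (η k - θ k) with hδ | hδ
  · exact ⟨j, by simpa using hj.ne', by simp [transfer_apply_left hjk.ne, δ, hδ]⟩
  · exact ⟨k, by simpa using hk.ne, by simp [transfer_apply_right hjk.ne, δ, hδ]⟩

lemma mem_permutohedron_of_monotone {θ η : Fin n → ℝ} (hθ : Monotone θ) (hη : Monotone η)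
    (hsum : ∑ i, θ i = ∑ i, η i) (hle : ∀ m ≤ n, lowerSum η m ≤ lowerSum θ m) :
    θ ∈ permutohedron η := by
  induction hN : #{i | θ i ≠ η i} using Nat.strong_induction_on generalizing η with
  | _ N ih =>
  by_cases hne : θ = η
  · exact hne ▸ self_mem_permutohedron θ
  obtain ⟨j, k, δ, hδ, hδjk, hmono, hle', hcard⟩ :=
    exists_transfer_of_monotone hθ hη hsum hle hne
  exact mem_permutohedron_trans
    (ih _ (hN ▸ hcard) hmono (hsum.trans sum_transfer.symm) hle' rfl)
    (transfer_mem_permutohedron hδ hδjk)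

theorem MajorizedBy.mem_permutohedron {θ η : Fin n → ℝ} (h : MajorizedBy θ η) :
    θ ∈ permutohedron η := by
  have hsorted : sortedVec θ ∈ permutohedron (sortedVec η) :=
    mem_permutohedron_of_monotone (Tuple.monotone_sort θ) (Tuple.monotone_sort η)
      (by simpa [sortedVec, Equiv.sum_comp] using h.1) h.2
  rw [sortedVec, permutohedron_comp] at hsorted
  simpa [sortedVec, comp_assoc] using comp_mem_permutohedron_of_mem hsorted (Tuple.sort θ)⁻¹

end Majorization

lemma IsPareto.measure_lt {P : Measure Ω} [IsProbabilityMeasure P] {α : ℝ} {X : Ω → ℝ}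
    (h : IsPareto P α X) (x : ℝ) :
    P {ω | x < X ω} = if 1 ≤ x then ENNReal.ofReal (x ^ (-α)) else 1 := by
  split_ifs with hx
  · exact h.2.1 x hx
  have hsub : {ω | x < X ω}ᶜ ⊆ {ω | X ω < 1} := fun ω (hω : ¬x < X ω) =>
    (not_lt.1 hω).trans_lt (not_le.1 hx)
  rw [← prob_compl_eq_zero_iff (show MeasurableSet {ω | x < X ω} from h.1 measurableSet_Ioi)]
  exact measure_mono_null hsub h.2.2

lemma IsPareto.identDistrib {P : Measure Ω} [IsProbabilityMeasure P] {α : ℝ} {X Y : Ω → ℝ}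
    (hX : IsPareto P α X) (hY : IsPareto P α Y) : IdentDistrib X Y P P where
  aemeasurable_fst := hX.1.aemeasurable
  aemeasurable_snd := hY.1.aemeasurable
  map_eq := by
    have := Measure.isProbabilityMeasure_map (μ := P) hX.1.aemeasurable
    have := Measure.isProbabilityMeasure_map (μ := P) hY.1.aemeasurable
    refine Measure.ext_of_Iic _ _ fun a => ?_
    rw [← Set.compl_Ioi, prob_compl_eq_one_sub measurableSet_Ioi,
      prob_compl_eq_one_sub measurableSet_Ioi, Measure.map_apply hX.1 measurableSet_Ioi,
      Measure.map_apply hY.1 measurableSet_Ioi]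
    exact congrArg (1 - ·) ((hX.measure_lt a).trans (hY.measure_lt a).symm)

section Exchangeable

variable {ι β : Type*} [MeasurableSpace β]

def Exchangeable (X : ι → Ω → β) (P : Measure Ω) : Prop :=
  ∀ σ : Equiv.Perm ι, IdentDistrib (fun ω i => X (σ i) ω) (fun ω i => X i ω) P P

variable [Fintype ι] {P : Measure Ω}

lemma ProbabilityTheory.iIndepFun.exchangeable {X : ι → Ω → β}
    (hind : iIndepFun X P) (hid : ∀ i j, IdentDistrib (X i) (X j) P P) : Exchangeable X P :=
  fun σ => {
    aemeasurable_fst := aemeasurable_pi_lambda _ fun i => (hid (σ i) i).aemeasurable_fst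
    aemeasurable_snd := aemeasurable_pi_lambda _ fun i => (hid i i).aemeasurable_fst
    map_eq := by
      rw [(hind.precomp σ.injective).map_fun_eq_pi_map fun i => (hid (σ i) i).aemeasurable_fst,
        hind.map_fun_eq_pi_map fun i => (hid i i).aemeasurable_fst]
      exact congrArg Measure.pi (funext fun i => (hid (σ i) i).map_eq) }

variable {X : ι → Ω → ℝ}

lemma Exchangeable.identDistrib_dotProduct_comp_perm (hX : Exchangeable X P)
    (η : ι → ℝ) (σ : Equiv.Perm ι) :
    IdentDistrib (fun ω => ∑ i, η (σ i) * X i ω) (fun ω => ∑ i, η i * X i ω) P P := by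
  have hdot : Measurable fun x : ι → ℝ => ∑ i, η i * x i := by fun_prop
  convert (hX σ⁻¹).comp hdot using 1
  · funext ω
    rw [comp_apply, ← Equiv.sum_comp σ fun i => η i * X (σ⁻¹ i) ω]
    simp
  · rfl

theorem Exchangeable.integral_le_of_mem_permutohedron [IsProbabilityMeasure P]
    (hX : Exchangeable X P)
    {u : ℝ → ℝ} (hu : ConcaveOn ℝ Set.univ u) {θ η : ι → ℝ} (hθη : θ ∈ permutohedron η)
    (hη : Integrable (fun ω => u (∑ i, η i * X i ω)) P)
    (hθ : Integrable (fun ω => u (∑ i, θ i * X i ω)) P) :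
    ∫ ω, u (∑ i, η i * X i ω) ∂P ≤ ∫ ω, u (∑ i, θ i * X i ω) ∂P := by
  obtain ⟨κ, _, w, z, hw₀, hw₁, hz, rfl⟩ := mem_convexHull_iff_exists_fintype.1 hθη
  choose σ hσ using hz
  have hu_meas : Measurable u := (continuousOn_univ.1 (hu.continuousOn isOpen_univ)).measurable
  have hlaw (c : κ) : IdentDistrib (fun ω => u (∑ i, z c i * X i ω))
      (fun ω => u (∑ i, η i * X i ω)) P P := by
    rw [← hσ c]
    exact (hX.identDistrib_dotProduct_comp_perm η (σ c)).comp hu_meas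
  have hint (c : κ) := (hlaw c).integrable_iff.2 hη
  calc ∫ ω, u (∑ i, η i * X i ω) ∂P
      = ∫ ω, ∑ c, w c * u (∑ i, z c i * X i ω) ∂P := by
        rw [integral_finsetSum _ fun c _ => (hint c).const_mul _]
        simp_rw [integral_const_mul, (hlaw _).integral_eq, ← sum_mul, hw₁, one_mul]
    _ ≤ ∫ ω, u (∑ i, (∑ c, w c • z c) i * X i ω) ∂P := by
        refine integral_mono (integrable_finsetSum _ fun c _ => (hint c).const_mul _) hθ
          fun ω => ?_
        have hjensen := hu.le_map_sum (t := univ) (fun c _ => hw₀ c) hw₁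
          fun c _ => Set.mem_univ (∑ i, z c i * X i ω)
        simp only [smul_eq_mul] at hjensen
        refine hjensen.trans_eq (congrArg u ?_)
        simp only [Finset.sum_apply, Pi.smul_apply, smul_eq_mul, sum_mul, mul_sum, mul_assoc]
        exact sum_comm

end Exchangeable

theorem stmt_7 (P : Measure Ω) [IsProbabilityMeasure P] (n : ℕ)
    (α : ℝ)
    (X : Fin n → Ω → ℝ) (hX : ∀ i, IsPareto P α (X i))
    (hind : iIndepFun X P)
    (θ η : Fin n → ℝ)
    (hmaj : MajorizedBy θ η) :
    ∀ u : ℝ → ℝ, Monotone u → ConcaveOn ℝ Set.univ u →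
      Integrable (fun ω => u (∑ i, η i * X i ω)) P →
      Integrable (fun ω => u (∑ i, θ i * X i ω)) P →
      ∫ ω, u (∑ i, η i * X i ω) ∂P ≤ ∫ ω, u (∑ i, θ i * X i ω) ∂P :=
  fun _ _ hu =>
    (hind.exchangeable fun i j => (hX i).identDistrib (hX j)).integral_le_of_mem_permutohedron hu
      hmaj.mem_permutohedron
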